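/- arXiv:2201.05134 — 2 statements merged into one kernel-verified Lean document; each statement's English description precedes it below -/
import Mathlib

section
/- Let Φ ⊂ ℝ^n be an irreducible crystallographic root system with positive system Φ⁺ and simple system Δ ⊆ Φ⁺, and let W be the corresponding Weyl group. If α, β ∈ Φ⁺ are incomparable in the root order (neither α − β nor β − α lies in cone(Δ)), then there exists w ∈ W with wΔ ∩ Φ⁺ = {α, β}. -/
/-!
Choose a functional `z`, generic on `Φ`, that is a small positive multiple of `c` on the plane
`span {α, β}` and, off it, close to a functional `z₀ ⊥ α, β` that is negative on the `c`-positive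
roots obtuse to both `α` and `β`. As no positive multiple of `α - β` is a root, the
crystallographic condition confines the roots of the plane to `±cone(α, β)`, so `α` and `β` are
indecomposable in `Φ⁺_z`. Any other root `γ` positive for both `c` and `z` decomposes: in the
plane as a combination of `α, β`, and off it as `(γ - α) + α` when it is acute to `α` (the
alternative `α = (α - γ) + γ` being excluded), likewise for `β`, while `z` rules out the obtuse
case. The simple roots of `Φ⁺_z` are its indecomposable elements, so they meet `Φ⁺_c` in
`{α, β}`, and the Weyl group, transitive on positive systems, carries `Δ` onto them.
-/

/-- Euclidean dot product on `Fin n → ℝ`. -/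
def dotp {n : ℕ} (c x : Fin n → ℝ) : ℝ := ∑ i, c i * x i

/-- The reflection `s_α` in the hyperplane `α^⊥`. -/
noncomputable def reflectRoot {n : ℕ} (α x : Fin n → ℝ) : Fin n → ℝ :=
  x - (2 * dotp α x / dotp α α) • α

/-- `Φ` is a root system in `ℝ^n`. -/
def IsRootSystem {n : ℕ} (Φ : Finset (Fin n → ℝ)) : Prop :=
  Φ.Nonempty ∧ (0 : Fin n → ℝ) ∉ Φ ∧
  (∀ α ∈ Φ, -α ∈ Φ) ∧
  (∀ α ∈ Φ, ∀ t : ℝ, t • α ∈ Φ → t = 1 ∨ t = -1) ∧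
  (∀ α ∈ Φ, ∀ β ∈ Φ, reflectRoot α β ∈ Φ)

/-- `Φ` is crystallographic. -/
def IsCrystallographic {n : ℕ} (Φ : Finset (Fin n → ℝ)) : Prop :=
  ∀ α ∈ Φ, ∀ β ∈ Φ, ∃ k : ℤ, 2 * dotp α β / dotp α α = (k : ℝ)

/-- `Φ` is irreducible: no partition into two nonempty mutually orthogonal subsets. -/
def IsIrreducibleRS {n : ℕ} (Φ : Finset (Fin n → ℝ)) : Prop :=
  ∀ S : Finset (Fin n → ℝ), S ⊆ Φ → S.Nonempty → (∃ β ∈ Φ, β ∉ S) →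
    ∃ α ∈ S, ∃ β ∈ Φ, β ∉ S ∧ dotp α β ≠ 0

/-- `w` belongs to the Weyl group of `Φ`: it is a finite composition of reflections `s_α`,
`α ∈ Φ`. -/
def InWeylGroup {n : ℕ} (Φ : Finset (Fin n → ℝ)) (w : (Fin n → ℝ) → (Fin n → ℝ)) : Prop :=
  ∃ L : List (Fin n → ℝ), (∀ α ∈ L, α ∈ Φ) ∧
    w = L.foldr (fun α f => reflectRoot α ∘ f) id

/-- `x` lies in the cone of nonnegative combinations of the finite set `S`. -/
def InCone {n : ℕ} (S : Finset (Fin n → ℝ)) (x : Fin n → ℝ) : Prop :=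
  ∃ lam : (Fin n → ℝ) → ℝ, (∀ s ∈ S, 0 ≤ lam s) ∧ x = ∑ s ∈ S, lam s • s

variable {n : ℕ}

section Dotp

theorem dotp_eq_dotProduct (x y : Fin n → ℝ) : dotp x y = x ⬝ᵥ y := rfl

theorem dotp_comm (x y : Fin n → ℝ) : dotp x y = dotp y x := dotProduct_comm x y

@[simp] theorem dotp_add (x y z : Fin n → ℝ) : dotp x (y + z) = dotp x y + dotp x z :=
  dotProduct_add x y z

@[simp] theorem add_dotp (x y z : Fin n → ℝ) : dotp (x + y) z = dotp x z + dotp y z :=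
  add_dotProduct x y z

@[simp] theorem dotp_sub (x y z : Fin n → ℝ) : dotp x (y - z) = dotp x y - dotp x z :=
  dotProduct_sub x y z

@[simp] theorem sub_dotp (x y z : Fin n → ℝ) : dotp (x - y) z = dotp x z - dotp y z :=
  sub_dotProduct x y z

@[simp] theorem dotp_neg (x y : Fin n → ℝ) : dotp x (-y) = -dotp x y := dotProduct_neg x y

@[simp] theorem neg_dotp (x y : Fin n → ℝ) : dotp (-x) y = -dotp x y := neg_dotProduct x y

@[simp] theorem dotp_smul (r : ℝ) (x y : Fin n → ℝ) : dotp x (r • y) = r * dotp x y :=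
  dotProduct_smul r x y

@[simp] theorem smul_dotp (r : ℝ) (x y : Fin n → ℝ) : dotp (r • x) y = r * dotp x y :=
  smul_dotProduct r x y

theorem dotp_sum {ι : Type*} (x : Fin n → ℝ) (s : Finset ι) (f : ι → Fin n → ℝ) :
    dotp x (∑ i ∈ s, f i) = ∑ i ∈ s, dotp x (f i) :=
  dotProduct_sum x s f

theorem dotp_self_nonneg (x : Fin n → ℝ) : 0 ≤ dotp x x :=
  Finset.sum_nonneg fun i _ => mul_self_nonneg (x i)

theorem dotp_self_pos {x : Fin n → ℝ} (hx : x ≠ 0) : 0 < dotp x x :=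
  (dotp_self_nonneg x).lt_of_ne (Ne.symm (mt dotProduct_self_eq_zero.1 hx))

end Dotp

section Reflection

theorem reflectRoot_add (a x y : Fin n → ℝ) :
    reflectRoot a (x + y) = reflectRoot a x + reflectRoot a y := by
  simp only [reflectRoot, dotp_add, add_div, mul_add, add_smul]; abel

theorem reflectRoot_smul (a : Fin n → ℝ) (r : ℝ) (x : Fin n → ℝ) :
    reflectRoot a (r • x) = r • reflectRoot a x := by
  simp only [reflectRoot, dotp_smul, smul_sub, smul_smul]; ring_nf

theorem dotp_reflectRoot (a x y : Fin n → ℝ) :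
    dotp x (reflectRoot a y) = dotp (reflectRoot a x) y := by
  simp only [reflectRoot, dotp_sub, sub_dotp, dotp_smul, smul_dotp, dotp_comm x a,
    dotp_comm x y]
  ring

theorem reflectRoot_self {a : Fin n → ℝ} (ha : a ≠ 0) : reflectRoot a a = -a := by
  rw [reflectRoot, mul_div_assoc, div_self (dotp_self_pos ha).ne', mul_one, two_smul]; abel

theorem reflectRoot_involutive {a : Fin n → ℝ} (ha : a ≠ 0) :
    Function.Involutive (reflectRoot a) := fun x => by
  have : dotp a (reflectRoot a x) = -dotp a x := by
    rw [dotp_reflectRoot, reflectRoot_self ha, neg_dotp]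
  rw [reflectRoot, this, reflectRoot]
  simp only [mul_neg, neg_div, neg_smul, sub_neg_eq_add, sub_add_cancel]

noncomputable def reflectionEquiv {a : Fin n → ℝ} (ha : a ≠ 0) :
    (Fin n → ℝ) ≃ₗ[ℝ] (Fin n → ℝ) :=
  LinearEquiv.ofInvolutive ⟨⟨reflectRoot a, reflectRoot_add a⟩, reflectRoot_smul a⟩
    (reflectRoot_involutive ha)

@[simp] theorem coe_reflectionEquiv {a : Fin n → ℝ} (ha : a ≠ 0) :
    ⇑(reflectionEquiv ha) = reflectRoot a := rfl

end Reflection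

namespace IsRootSystem

variable {Φ : Finset (Fin n → ℝ)} (hΦ : IsRootSystem Φ)
include hΦ

theorem ne_zero {α : Fin n → ℝ} (hα : α ∈ Φ) : α ≠ 0 := fun h => hΦ.2.1 (h ▸ hα)

theorem neg_mem {α : Fin n → ℝ} (hα : α ∈ Φ) : -α ∈ Φ := hΦ.2.2.1 α hα

theorem reflectRoot_mem {α β : Fin n → ℝ} (hα : α ∈ Φ) (hβ : β ∈ Φ) : reflectRoot α β ∈ Φ :=
  hΦ.2.2.2.2 α hα β hβ

theorem eq_one_or_eq_neg_one {α : Fin n → ℝ} {t : ℝ} (hα : α ∈ Φ) (ht : t • α ∈ Φ) :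
    t = 1 ∨ t = -1 :=
  hΦ.2.2.2.1 α hα t ht

theorem smul_mem_iff {α : Fin n → ℝ} {t : ℝ} (hα : α ∈ Φ) (ht : 0 ≤ t) :
    t • α ∈ Φ ↔ t = 1 := by
  refine ⟨fun h => ?_, fun h => by rwa [h, one_smul]⟩
  rcases hΦ.eq_one_or_eq_neg_one hα h with h | h
  · exact h
  · linarith

theorem reflectRoot_mem_iff {α x : Fin n → ℝ} (hα : α ∈ Φ) : reflectRoot α x ∈ Φ ↔ x ∈ Φ :=
  ⟨fun h => reflectRoot_involutive (hΦ.ne_zero hα) x ▸ hΦ.reflectRoot_mem hα h,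
    hΦ.reflectRoot_mem hα⟩

/-- Two roots at an acute angle have positive Cartan integers with product at most `4`: if one of
them is `1` the corresponding reflection is the subtraction, and if both are `2` then `α = β`. -/
theorem sub_mem (hCr : IsCrystallographic Φ) {α β : Fin n → ℝ} (hα : α ∈ Φ) (hβ : β ∈ Φ)
    (hαβ : 0 < dotp α β) (hne : α ≠ β) : α - β ∈ Φ := by
  have hA := dotp_self_pos (hΦ.ne_zero hα)
  have hB := dotp_self_pos (hΦ.ne_zero hβ)
  obtain ⟨k, hk⟩ := hCr β hβ α hα
  obtain ⟨l, hl⟩ := hCr α hα β hβ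
  rw [dotp_comm β α] at hk
  have hk₁ : 1 ≤ k := by
    have : (0 : ℝ) < k := hk ▸ by positivity
    exact_mod_cast this
  have hl₁ : 1 ≤ l := by
    have : (0 : ℝ) < l := hl ▸ by positivity
    exact_mod_cast this
  rcases eq_or_lt_of_le hk₁ with rfl | hk₂
  · have := hΦ.reflectRoot_mem hβ hα
    rwa [reflectRoot, dotp_comm β α, hk, Int.cast_one, one_smul] at this
  rcases eq_or_lt_of_le hl₁ with rfl | hl₂
  · have := hΦ.neg_mem (hΦ.reflectRoot_mem hα hβ)
    rwa [reflectRoot, hl, Int.cast_one, one_smul, neg_sub] at this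
  have hkl : k * l ≤ 4 := by
    have hcs : dotp α β ^ 2 ≤ dotp α α * dotp β β := by
      simpa only [dotp_eq_dotProduct, dotProduct, pow_two] using
        Finset.sum_mul_sq_le_sq_mul_sq Finset.univ α β
    have : ((k * l : ℤ) : ℝ) ≤ 4 := by
      rw [Int.cast_mul, ← hk, ← hl, div_mul_div_comm, div_le_iff₀ (by positivity)]
      nlinarith
    exact_mod_cast this
  have hk2 : (k : ℝ) = 2 := by exact_mod_cast (by nlinarith : k = 2)
  have hl2 : (l : ℝ) = 2 := by exact_mod_cast (by nlinarith : l = 2)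
  rw [hk2, div_eq_iff hB.ne'] at hk
  rw [hl2, div_eq_iff hA.ne'] at hl
  have : dotp (α - β) (α - β) = 0 := by
    simp only [sub_dotp, dotp_sub, dotp_comm β α]; linarith
  exact absurd (sub_eq_zero.1 (dotProduct_self_eq_zero.1 this)) hne

end IsRootSystem

section Cone

variable {S T : Finset (Fin n → ℝ)} {x y : Fin n → ℝ}

theorem inCone_zero (S : Finset (Fin n → ℝ)) : InCone S 0 :=
  ⟨0, fun _ _ => le_rfl, by simp⟩

theorem inCone_of_mem (hx : x ∈ S) : InCone S x := by
  classical
  refine ⟨fun s => if s = x then 1 else 0, fun s _ => by positivity, ?_⟩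
  simp [ite_smul, Finset.sum_ite_eq', hx]

theorem InCone.add (hx : InCone S x) (hy : InCone S y) : InCone S (x + y) := by
  obtain ⟨l, hl, rfl⟩ := hx
  obtain ⟨m, hm, rfl⟩ := hy
  exact ⟨l + m, fun s hs => add_nonneg (hl s hs) (hm s hs), by
    simp only [Pi.add_apply, add_smul, Finset.sum_add_distrib]⟩

theorem InCone.smul {t : ℝ} (ht : 0 ≤ t) (hx : InCone S x) : InCone S (t • x) := by
  obtain ⟨l, hl, rfl⟩ := hx
  exact ⟨t • l, fun s hs => mul_nonneg ht (hl s hs), by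
    simp only [Finset.smul_sum, Pi.smul_apply, smul_eq_mul, mul_smul]⟩

theorem InCone.mono (hST : S ⊆ T) (hx : InCone S x) : InCone T x := by
  classical
  obtain ⟨l, hl, rfl⟩ := hx
  refine ⟨fun s => if s ∈ S then l s else 0, fun s _ => ?_, ?_⟩
  · dsimp only
    split_ifs with hs
    exacts [hl s hs, le_rfl]
  · simp only [ite_smul, zero_smul, Finset.sum_ite_mem, Finset.inter_eq_right.2 hST]

theorem InCone.dotp_nonneg {u : Fin n → ℝ} (hx : InCone S x) (hS : ∀ s ∈ S, 0 ≤ dotp u s) :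
    0 ≤ dotp u x := by
  obtain ⟨l, hl, rfl⟩ := hx
  rw [dotp_sum]
  exact Finset.sum_nonneg fun s hs => by rw [dotp_smul]; exact mul_nonneg (hl s hs) (hS s hs)

theorem InCone.eq_zero_of_lex {u v : Fin n → ℝ} (hx : InCone S x)
    (hu : ∀ s ∈ S, 0 ≤ dotp u s) (hv : ∀ s ∈ S, dotp u s = 0 → 0 < dotp v s)
    (hux : dotp u x ≤ 0) (hvx : dotp v x ≤ 0) : x = 0 := by
  obtain ⟨l, hl, rfl⟩ := hx
  simp only [dotp_sum, dotp_smul] at hux hvx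
  have hlu : ∀ s ∈ S, l s * dotp u s = 0 :=
    (Finset.sum_eq_zero_iff_of_nonneg fun s hs => mul_nonneg (hl s hs) (hu s hs)).1
      (le_antisymm hux (Finset.sum_nonneg fun s hs => mul_nonneg (hl s hs) (hu s hs)))
  have hlv_nonneg : ∀ s ∈ S, 0 ≤ l s * dotp v s := fun s hs => by
    rcases (hl s hs).eq_or_lt with h | h
    · rw [← h, zero_mul]
    · exact (mul_pos h (hv s hs ((mul_eq_zero.1 (hlu s hs)).resolve_left h.ne'))).le
  have hlv := (Finset.sum_eq_zero_iff_of_nonneg hlv_nonneg).1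
    (le_antisymm hvx (Finset.sum_nonneg hlv_nonneg))
  refine Finset.sum_eq_zero fun s hs => ?_
  rcases (hl s hs).eq_or_lt with h | h
  · rw [← h, zero_smul]
  · have := hv s hs ((mul_eq_zero.1 (hlu s hs)).resolve_left h.ne')
    exact absurd (hlv s hs) (mul_pos h this).ne'

theorem InCone.map (e : (Fin n → ℝ) ≃ₗ[ℝ] (Fin n → ℝ))
    (hx : InCone S x) : InCone (S.image e) (e x) := by
  obtain ⟨l, hl, rfl⟩ := hx
  refine ⟨l ∘ e.symm, fun s hs => ?_, ?_⟩
  · obtain ⟨t, ht, rfl⟩ := Finset.mem_image.1 hs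
    simpa using hl t ht
  · rw [Finset.sum_image fun _ _ _ _ h => e.injective h]
    simp

theorem inCone_image_iff (e : (Fin n → ℝ) ≃ₗ[ℝ] (Fin n → ℝ)) :
    InCone (S.image e) (e x) ↔ InCone S x := by
  refine ⟨fun h => ?_, InCone.map e⟩
  simpa [Finset.image_image, Function.comp_def] using h.map e.symm

end Cone

section SimpleSystem

noncomputable def positiveRoots (Φ : Finset (Fin n → ℝ)) (c : Fin n → ℝ) : Finset (Fin n → ℝ) :=
  Φ.filter fun γ => 0 < dotp c γ

theorem mem_positiveRoots {Φ : Finset (Fin n → ℝ)} {c γ : Fin n → ℝ} :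
    γ ∈ positiveRoots Φ c ↔ γ ∈ Φ ∧ 0 < dotp c γ :=
  Finset.mem_filter

def IsSimpleSystem (P Δ : Finset (Fin n → ℝ)) : Prop :=
  Δ ⊆ P ∧ (∀ γ ∈ P, InCone Δ γ) ∧ ∀ Δ' ⊆ P, (∀ γ ∈ P, InCone Δ' γ) → Δ ⊆ Δ'

namespace IsSimpleSystem

variable {P Δ : Finset (Fin n → ℝ)} (hΔ : IsSimpleSystem P Δ)
include hΔ

theorem mem_iff {δ : Fin n → ℝ} : δ ∈ Δ ↔ δ ∈ P ∧ ¬InCone (P.erase δ) δ := by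
  refine ⟨fun hδ => ⟨hΔ.1 hδ, fun hdec => ?_⟩, fun ⟨hδ, hind⟩ => ?_⟩
  · have hgen : ∀ γ ∈ P, InCone (P.erase δ) γ := fun γ hγ => by
      by_cases h : γ = δ
      · exact h ▸ hdec
      · exact inCone_of_mem (Finset.mem_erase.2 ⟨h, hγ⟩)
    exact Finset.notMem_erase δ P (hΔ.2.2 _ (Finset.erase_subset δ P) hgen hδ)
  · by_contra hnot
    refine hind ((hΔ.2.1 δ hδ).mono fun t ht => Finset.mem_erase.2 ⟨?_, hΔ.1 ht⟩)
    rintro rfl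
    exact hnot ht

theorem mem_image_iff (e : (Fin n → ℝ) ≃ₗ[ℝ] (Fin n → ℝ))
    {ξ : Fin n → ℝ} : ξ ∈ e '' Δ ↔ ξ ∈ P.image e ∧ ¬InCone ((P.image e).erase ξ) ξ := by
  obtain ⟨γ, rfl⟩ := e.surjective ξ
  rw [e.injective.mem_set_image, Finset.mem_coe, hΔ.mem_iff, e.injective.mem_finset_image,
    ← Finset.image_erase e.injective, inCone_image_iff]

end IsSimpleSystem

variable {Φ Δ : Finset (Fin n → ℝ)} {c : Fin n → ℝ} (hΦ : IsRootSystem Φ)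
  (hc : ∀ γ ∈ Φ, dotp c γ ≠ 0) (hΔ : IsSimpleSystem (positiveRoots Φ c) Δ)
include hΦ hc hΔ

/-- Otherwise `γ` and `-s_δ γ` are positive roots other than `δ` summing to a positive multiple
of `δ`, which is then decomposable. -/
theorem IsSimpleSystem.reflectRoot_mem {δ γ : Fin n → ℝ} (hδ : δ ∈ Δ)
    (hγ : γ ∈ positiveRoots Φ c) (hne : γ ≠ δ) : reflectRoot δ γ ∈ positiveRoots Φ c := by
  obtain ⟨hδP, hδind⟩ := hΔ.mem_iff.1 hδ
  obtain ⟨hδΦ, hcδ⟩ := mem_positiveRoots.1 hδP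
  obtain ⟨hγΦ, hcγ⟩ := mem_positiveRoots.1 hγ
  have hmem := hΦ.reflectRoot_mem hδΦ hγΦ
  refine mem_positiveRoots.2 ⟨hmem, (hc _ hmem).lt_or_gt.resolve_left fun hneg => hδind ?_⟩
  set k := 2 * dotp δ γ / dotp δ δ
  have hsum : γ + -reflectRoot δ γ = k • δ := by rw [reflectRoot]; abel
  have hk : 0 < k := by
    have := congrArg (dotp c) hsum
    rw [dotp_add, dotp_neg, dotp_smul] at this
    exact pos_of_mul_pos_left (this ▸ by linarith) hcδ.le
  have hγ' : -reflectRoot δ γ ∈ (positiveRoots Φ c).erase δ := by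
    refine Finset.mem_erase.2 ⟨fun h => hne ?_, mem_positiveRoots.2 ⟨hΦ.neg_mem hmem, ?_⟩⟩
    · have h' : reflectRoot δ γ = reflectRoot δ δ := by
        rw [reflectRoot_self (hΦ.ne_zero hδΦ), ← neg_eq_iff_eq_neg, h]
      exact (reflectRoot_involutive (hΦ.ne_zero hδΦ)).injective h'
    · rw [dotp_neg]; linarith
  have hδ_eq : δ = k⁻¹ • (γ + -reflectRoot δ γ) := by
    rw [hsum, smul_smul, inv_mul_cancel₀ hk.ne', one_smul]
  have := ((inCone_of_mem (Finset.mem_erase.2 ⟨hne, hγ⟩)).add (inCone_of_mem hγ')).smul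
    (inv_nonneg.2 hk.le)
  rwa [← hδ_eq] at this

end SimpleSystem

section WeylGroup

variable {Φ : Finset (Fin n → ℝ)}

theorem inWeylGroup_id : InWeylGroup Φ id := ⟨[], by simp, rfl⟩

theorem InWeylGroup.reflectRoot_comp {w : (Fin n → ℝ) → Fin n → ℝ} {a : Fin n → ℝ}
    (hw : InWeylGroup Φ w) (ha : a ∈ Φ) : InWeylGroup Φ (reflectRoot a ∘ w) := by
  obtain ⟨L, hL, rfl⟩ := hw
  exact ⟨a :: L, by simpa using ⟨ha, hL⟩, rfl⟩

theorem InWeylGroup.exists_linearEquiv (hΦ : IsRootSystem Φ) {w : (Fin n → ℝ) → Fin n → ℝ}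
    (hw : InWeylGroup Φ w) :
    ∃ e : (Fin n → ℝ) ≃ₗ[ℝ] (Fin n → ℝ), ⇑e = w ∧ ∀ x, e x ∈ Φ ↔ x ∈ Φ := by
  obtain ⟨L, hL, rfl⟩ := hw
  induction L with
  | nil => exact ⟨LinearEquiv.refl ℝ _, rfl, fun _ => Iff.rfl⟩
  | cons a L ih =>
    obtain ⟨e, he, heΦ⟩ := ih fun b hb => hL b (List.mem_cons_of_mem a hb)
    have ha := hL a List.mem_cons_self
    refine ⟨e.trans (reflectionEquiv (hΦ.ne_zero ha)), ?_, fun x => ?_⟩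
    · ext1 x
      simp [he]
    · simp [hΦ.reflectRoot_mem_iff ha, heΦ]

variable {Δ : Finset (Fin n → ℝ)} {c : Fin n → ℝ} (hΦ : IsRootSystem Φ)
  (hc : ∀ γ ∈ Φ, dotp c γ ≠ 0) (hΔ : IsSimpleSystem (positiveRoots Φ c) Δ)
include hΦ hc hΔ

theorem IsSimpleSystem.card_filter_reflectRoot {z δ : Fin n → ℝ} (hδ : δ ∈ Δ)
    (hzδ : dotp z δ < 0) :
    ((positiveRoots Φ c).filter fun γ => dotp (reflectRoot δ z) γ < 0).card + 1 =
      ((positiveRoots Φ c).filter fun γ => dotp z γ < 0).card := by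
  have hδP := hΔ.1 hδ
  have hδ0 := hΦ.ne_zero (mem_positiveRoots.1 hδP).1
  have hinv := reflectRoot_involutive hδ0
  rw [← Finset.card_erase_add_one (s := (positiveRoots Φ c).filter fun γ => dotp z γ < 0)
    (Finset.mem_filter.2 ⟨hδP, hzδ⟩)]
  congr 1
  refine Finset.card_nbij' (reflectRoot δ) (reflectRoot δ) (fun γ hγ => ?_) (fun γ hγ => ?_)
    (fun γ _ => hinv γ) (fun γ _ => hinv γ)
  · obtain ⟨hγP, hzγ⟩ := Finset.mem_filter.1 (Finset.mem_coe.1 hγ)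
    rw [← dotp_reflectRoot] at hzγ
    have hγδ : γ ≠ δ := by
      rintro rfl
      rw [reflectRoot_self hδ0, dotp_neg] at hzγ
      linarith
    refine Finset.mem_erase.2 ⟨fun h => ?_, Finset.mem_filter.2
      ⟨hΔ.reflectRoot_mem hΦ hc hδ hγP hγδ, hzγ⟩⟩
    have hcγ := (mem_positiveRoots.1 hγP).2
    rw [← hinv γ, h, reflectRoot_self hδ0, dotp_neg] at hcγ
    linarith [(mem_positiveRoots.1 hδP).2]
  · obtain ⟨hγδ, hγ⟩ := Finset.mem_erase.1 (Finset.mem_coe.1 hγ)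
    obtain ⟨hγP, hzγ⟩ := Finset.mem_filter.1 hγ
    refine Finset.mem_filter.2 ⟨hΔ.reflectRoot_mem hΦ hc hδ hγP hγδ, ?_⟩
    rwa [← dotp_reflectRoot, hinv]

theorem IsSimpleSystem.pos_iff_of_forall_nonneg {z : Fin n → ℝ} (hz : ∀ γ ∈ Φ, dotp z γ ≠ 0)
    (hzΔ : ∀ δ ∈ Δ, 0 ≤ dotp z δ) {γ : Fin n → ℝ} (hγ : γ ∈ Φ) :
    0 < dotp z γ ↔ 0 < dotp c γ := by
  have hpos : ∀ γ ∈ Φ, 0 < dotp c γ → 0 < dotp z γ := fun γ hγ hcγ =>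
    ((hΔ.2.1 γ (mem_positiveRoots.2 ⟨hγ, hcγ⟩)).dotp_nonneg hzΔ).lt_of_ne (hz γ hγ).symm
  refine ⟨fun hzγ => (hc γ hγ).lt_or_gt.resolve_left fun hcγ => ?_, hpos γ hγ⟩
  have := hpos (-γ) (hΦ.neg_mem hγ) (by rw [dotp_neg]; linarith)
  rw [dotp_neg] at this
  linarith

/-- Reflecting in a simple root `δ` with `zᵀδ < 0` removes exactly one root from
`{γ ∈ Φ⁺_c | zᵀγ < 0}`; induct on its size. -/
theorem IsSimpleSystem.exists_weyl_pos_iff {z : Fin n → ℝ} (hz : ∀ γ ∈ Φ, dotp z γ ≠ 0) :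
    ∃ w, InWeylGroup Φ w ∧ ∀ γ ∈ Φ, (0 < dotp z (w γ) ↔ 0 < dotp c γ) := by
  obtain ⟨d, hd⟩ : ∃ d, ((positiveRoots Φ c).filter fun γ => dotp z γ < 0).card = d :=
    ⟨_, rfl⟩
  induction d using Nat.strong_induction_on generalizing z with
  | _ d ih =>
  by_cases hneg : ∃ δ ∈ Δ, dotp z δ < 0
  · obtain ⟨δ, hδ, hzδ⟩ := hneg
    have hδΦ := (mem_positiveRoots.1 (hΔ.1 hδ)).1
    have hz' : ∀ γ ∈ Φ, dotp (reflectRoot δ z) γ ≠ 0 := fun γ hγ => by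
      rw [← dotp_reflectRoot]; exact hz _ (hΦ.reflectRoot_mem hδΦ hγ)
    have hcard := hΔ.card_filter_reflectRoot hΦ hc hδ hzδ
    obtain ⟨w, hw, hwz⟩ := ih _ (by omega) hz' rfl
    refine ⟨reflectRoot δ ∘ w, hw.reflectRoot_comp hδΦ, fun γ hγ => ?_⟩
    rw [Function.comp_apply, dotp_reflectRoot]
    exact hwz γ hγ
  · push Not at hneg
    exact ⟨id, inWeylGroup_id, fun γ hγ => hΔ.pos_iff_of_forall_nonneg hΦ hc hz hneg hγ⟩

theorem IsSimpleSystem.exists_weyl_image_eq {z : Fin n → ℝ} (hz : ∀ γ ∈ Φ, dotp z γ ≠ 0) :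
    ∃ e : (Fin n → ℝ) ≃ₗ[ℝ] (Fin n → ℝ), InWeylGroup Φ e ∧
      (positiveRoots Φ c).image e = positiveRoots Φ z := by
  obtain ⟨w, hw, hwz⟩ := hΔ.exists_weyl_pos_iff hΦ hc hz
  obtain ⟨e, rfl, heΦ⟩ := hw.exists_linearEquiv hΦ
  refine ⟨e, hw, Finset.ext fun ξ => ?_⟩
  obtain ⟨γ, rfl⟩ := e.surjective ξ
  rw [e.injective.mem_finset_image, mem_positiveRoots, mem_positiveRoots, heΦ]
  exact and_congr_right fun hγ => (hwz γ hγ).symm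

end WeylGroup

section Plane

variable {α β : Fin n → ℝ}

def gram (α β : Fin n → ℝ) : ℝ := dotp α α * dotp β β - dotp α β ^ 2

theorem gram_comm (α β : Fin n → ℝ) : gram β α = gram α β := by
  rw [gram, gram, dotp_comm β α]; ring

theorem gram_pos (hβ : β ≠ 0) (h : ∀ t : ℝ, α ≠ t • β) : 0 < gram α β := by
  have hB := dotp_self_pos hβ
  set v := dotp β β • α - dotp α β • β
  have hv : v ≠ 0 := fun hv => h (dotp α β / dotp β β) <| by
    rw [div_eq_inv_mul, mul_smul, ← sub_eq_zero.1 hv, smul_smul, inv_mul_cancel₀ hB.ne',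
      one_smul]
  have : dotp v v = dotp β β * gram α β := by
    simp only [v, gram, sub_dotp, dotp_sub, smul_dotp, dotp_smul, dotp_comm β α]; ring
  exact pos_of_mul_pos_right (this ▸ dotp_self_pos hv) hB.le

/-- The vector `α*` of the plane spanned by `α, β` with `α*ᵀα = 1`, `α*ᵀβ = 0`; so `α*ᵀx` is the
`α`-coordinate of the orthogonal projection of `x` onto that plane. -/
noncomputable def planeDual (α β : Fin n → ℝ) : Fin n → ℝ :=
  (gram α β)⁻¹ • (dotp β β • α - dotp α β • β)

theorem dotp_planeDual_self (hG : gram α β ≠ 0) : dotp (planeDual α β) α = 1 := by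
  simp only [planeDual, smul_dotp, sub_dotp, dotp_comm β α]
  rw [inv_mul_eq_one₀ hG, gram]; ring

theorem dotp_planeDual_other (α β : Fin n → ℝ) : dotp (planeDual α β) β = 0 := by
  simp only [planeDual, smul_dotp, sub_dotp]; ring

theorem dotp_planeDual_smul_add_smul (hG : gram α β ≠ 0) (x y : ℝ) :
    dotp (planeDual α β) (x • α + y • β) = x := by
  simp [dotp_planeDual_self hG, dotp_planeDual_other]

theorem dotp_planeDual_swap_smul_add_smul (hG : gram α β ≠ 0) (x y : ℝ) :
    dotp (planeDual β α) (x • α + y • β) = y := by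
  rw [add_comm, dotp_planeDual_smul_add_smul (gram_comm α β ▸ hG)]

theorem dotp_planeDual_nonneg (hG : 0 < gram α β) (hC : dotp α β ≤ 0) {x : Fin n → ℝ}
    (hα : 0 ≤ dotp α x) (hβ : 0 ≤ dotp β x) : 0 ≤ dotp (planeDual α β) x := by
  simp only [planeDual, smul_dotp, sub_dotp, smul_dotp]
  exact mul_nonneg (inv_nonneg.2 hG.le)
    (by nlinarith [mul_nonneg (dotp_self_nonneg β) hα, mul_nonneg (neg_nonneg.2 hC) hβ])

noncomputable def planeProj (α β x : Fin n → ℝ) : Fin n → ℝ :=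
  dotp (planeDual α β) x • α + dotp (planeDual β α) x • β

theorem planeProj_comm (α β x : Fin n → ℝ) : planeProj β α x = planeProj α β x :=
  add_comm _ _

theorem dotp_planeProj_left (hG : gram α β ≠ 0) (x : Fin n → ℝ) :
    dotp α (planeProj α β x) = dotp α x := by
  simp only [planeProj, planeDual, gram, dotp_add, dotp_smul, smul_dotp, sub_dotp,
    dotp_comm β α] at hG ⊢
  field_simp
  ring

theorem dotp_planeProj_right (hG : gram α β ≠ 0) (x : Fin n → ℝ) :
    dotp β (planeProj α β x) = dotp β x := by
  rw [← planeProj_comm, dotp_planeProj_left (gram_comm α β ▸ hG)]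

theorem planeProj_mem_span (α β x : Fin n → ℝ) :
    planeProj α β x ∈ Submodule.span ℝ {α, β} :=
  Submodule.mem_span_pair.2 ⟨_, _, rfl⟩

theorem dotp_planeProj_sub_self_left (hG : gram α β ≠ 0) (x : Fin n → ℝ) :
    dotp (planeProj α β x - x) α = 0 := by
  rw [dotp_comm, dotp_sub, dotp_planeProj_left hG, sub_self]

theorem dotp_planeProj_sub_self_right (hG : gram α β ≠ 0) (x : Fin n → ℝ) :
    dotp (planeProj α β x - x) β = 0 := by
  rw [dotp_comm, dotp_sub, dotp_planeProj_right hG, sub_self]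

theorem dotp_eq_zero_of_mem_span {z γ : Fin n → ℝ} (hzα : dotp z α = 0) (hzβ : dotp z β = 0)
    (hγ : γ ∈ Submodule.span ℝ {α, β}) : dotp z γ = 0 := by
  obtain ⟨x, y, rfl⟩ := Submodule.mem_span_pair.1 hγ
  simp [hzα, hzβ]

theorem dotp_planeProj_sub_self_ne_zero (hG : gram α β ≠ 0) {x : Fin n → ℝ}
    (hx : x ∉ Submodule.span ℝ {α, β}) : dotp (planeProj α β x - x) x ≠ 0 := by
  intro h0
  have hu : dotp (planeProj α β x - x) (planeProj α β x - x) = 0 := by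
    rw [dotp_sub, h0, dotp_eq_zero_of_mem_span (dotp_planeProj_sub_self_left hG x)
      (dotp_planeProj_sub_self_right hG x) (planeProj_mem_span α β x), sub_zero]
  rw [← sub_eq_zero.1 (dotProduct_self_eq_zero.1 hu)] at hx
  exact hx (planeProj_mem_span α β x)

end Plane

/-- The arithmetic core of the rank-two case: with Cartan integers `m₁ = 2C/A`, `m₂ = 2C/B` of an
obtuse pair and `k₁, k₂` those of `γ = xα + yβ` against `α` and `β`, integrality pins a
fractional `(x, y)` down to `y = -x`. -/
theorem eq_neg_of_cartan_integers {A B C x y : ℝ} {m₁ m₂ k₁ k₂ : ℤ} (hA : 0 < A) (hB : 0 < B)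
    (hC : C ≤ 0) (hCS : C ^ 2 < A * B) (hm₁ : 2 * C / A = m₁) (hm₂ : 2 * C / B = m₂)
    (hk₁ : 2 * (x * A + y * C) / A = k₁) (hk₂ : 2 * (x * C + y * B) / B = k₂)
    (hx₀ : 0 < x) (hx₁ : x < 1) (hy₀ : y < 0) (hy₁ : -1 < y) : y = -x := by
  have e₁ : (k₁ : ℝ) = 2 * x + m₁ * y := by rw [← hk₁, ← hm₁]; field_simp
  have e₂ : (k₂ : ℝ) = 2 * y + m₂ * x := by rw [← hk₂, ← hm₂]; field_simp; ring
  rw [div_eq_iff hA.ne'] at hm₁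
  rw [div_eq_iff hB.ne'] at hm₂
  have hm₁0 : m₁ ≤ 0 := by exact_mod_cast (by nlinarith : (m₁ : ℝ) ≤ 0)
  have hm₂0 : m₂ ≤ 0 := by exact_mod_cast (by nlinarith : (m₂ : ℝ) ≤ 0)
  have hm : m₁ * m₂ < 4 := by
    have : ((m₁ * m₂ : ℤ) : ℝ) * (A * B) < 4 * (A * B) := by push_cast; nlinarith
    exact_mod_cast lt_of_mul_lt_mul_right this (by positivity)
  have hm₀ : m₁ = 0 ↔ m₂ = 0 := by
    have hmm : (m₁ : ℝ) * A = m₂ * B := hm₁.symm.trans hm₂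
    rw [← Int.cast_eq_zero (α := ℝ), ← Int.cast_eq_zero (α := ℝ) (n := m₂)]
    constructor <;> intro h <;> rw [h, zero_mul] at hmm
    exacts [(mul_eq_zero.1 hmm.symm).resolve_right hB.ne', (mul_eq_zero.1 hmm).resolve_right hA.ne']
  have hm₁3 : -3 ≤ m₁ ∧ -3 ≤ m₂ := by
    by_cases h : m₁ = 0
    · have := hm₀.1 h; omega
    · have h₁ : m₁ ≤ -1 := by omega
      have h₂ : m₂ ≤ -1 := by have := mt hm₀.2 h; omega
      constructor <;> nlinarith
  have hk₁0 : 0 < k₁ := by exact_mod_cast (by nlinarith : (0 : ℝ) < k₁)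
  have hk₁1 : k₁ < 2 - m₁ := by exact_mod_cast (by nlinarith : (k₁ : ℝ) < 2 - m₁)
  have hk₂0 : k₂ < 0 := by exact_mod_cast (by nlinarith : (k₂ : ℝ) < 0)
  have hk₂1 : m₂ - 2 < k₂ := by exact_mod_cast (by nlinarith : (m₂ : ℝ) - 2 < k₂)
  obtain ⟨_, _⟩ := hm₁3
  interval_cases m₁ <;> interval_cases m₂ <;> simp at hm₀ hm <;> interval_cases k₁ <;>
    interval_cases k₂ <;> push_cast at e₁ e₂ <;> linarith

section RankTwo

variable {Φ : Finset (Fin n → ℝ)} (hΦ : IsRootSystem Φ) (hCr : IsCrystallographic Φ)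
  {α β : Fin n → ℝ} (hG : 0 < gram α β) (hC : dotp α β ≤ 0)
include hΦ hCr hG hC

theorem sub_smul_add_smul_mem (hα : α ∈ Φ) {x y : ℝ} (hx : 0 < x) (hy : y < 0)
    (h : x • α + y • β ∈ Φ) : (x - 1) • α + y • β ∈ Φ := by
  have hne : x • α + y • β ≠ α := fun h' => by
    have := congrArg (dotp (planeDual β α)) h'
    rw [dotp_planeDual_swap_smul_add_smul hG.ne', dotp_planeDual_other] at this
    linarith
  have hpos : 0 < dotp (x • α + y • β) α := by
    simp only [add_dotp, smul_dotp, dotp_comm β α]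
    nlinarith [dotp_self_pos (hΦ.ne_zero hα)]
  convert hΦ.sub_mem hCr h hα hpos hne using 1
  module

theorem smul_add_add_smul_mem (hβ : β ∈ Φ) {x y : ℝ} (hx : 0 < x) (hy : y < 0)
    (h : x • α + y • β ∈ Φ) : x • α + (y + 1) • β ∈ Φ := by
  have hne : x • α + y • β ≠ -β := fun h' => by
    have := congrArg (dotp (planeDual α β)) h'
    rw [dotp_planeDual_smul_add_smul hG.ne', dotp_neg, dotp_planeDual_other, neg_zero] at this
    linarith
  have hpos : 0 < dotp (x • α + y • β) (-β) := by
    simp only [dotp_neg, add_dotp, smul_dotp]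
    nlinarith [dotp_self_pos (hΦ.ne_zero hβ)]
  convert hΦ.sub_mem hCr h (hΦ.neg_mem hβ) hpos hne using 1
  module

theorem neg_eq_of_smul_add_smul_mem (hα : α ∈ Φ) (hβ : β ∈ Φ) {x y : ℝ} (hx₀ : 0 < x)
    (hx₁ : x ≤ 1) (hy₀ : y < 0) (hy₁ : -1 ≤ y) (h : x • α + y • β ∈ Φ) : y = -x := by
  rcases hx₁.eq_or_lt with rfl | hx₁
  · have := sub_smul_add_smul_mem hΦ hCr hG hC hα hx₀ hy₀ h
    rw [sub_self, zero_smul, zero_add] at this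
    rcases hΦ.eq_one_or_eq_neg_one hβ this with h | h <;> linarith
  rcases hy₁.eq_or_lt with rfl | hy₁
  · have := smul_add_add_smul_mem hΦ hCr hG hC hβ hx₀ hy₀ h
    rw [neg_add_cancel, zero_smul, add_zero, hΦ.smul_mem_iff hα hx₀.le] at this
    linarith
  obtain ⟨k₁, hk₁⟩ := hCr α hα _ h
  obtain ⟨k₂, hk₂⟩ := hCr β hβ _ h
  obtain ⟨m₁, hm₁⟩ := hCr α hα β hβ
  obtain ⟨m₂, hm₂⟩ := hCr β hβ α hα
  simp only [dotp_add, dotp_smul, dotp_comm β α] at hk₁ hk₂ hm₂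
  exact eq_neg_of_cartan_integers (dotp_self_pos (hΦ.ne_zero hα))
    (dotp_self_pos (hΦ.ne_zero hβ)) hC (by rw [gram] at hG; linarith) hm₁ hm₂
    hk₁ hk₂ hx₀ hx₁ hy₀ hy₁

/-- A root with `x > 0 > y` is acute to `α` and obtuse to `β`, so subtracting `α` or adding `β`
keeps it a root; this moves it to `0 < x ≤ 1`, `-1 ≤ y < 0`, where integrality forces
`y = -x`, i.e. a positive multiple of `α - β`. -/
theorem mul_nonneg_of_smul_add_smul_mem (hα : α ∈ Φ) (hβ : β ∈ Φ)
    (hαβ : ∀ t : ℝ, 0 < t → t • (α - β) ∉ Φ) {x y : ℝ} (h : x • α + y • β ∈ Φ) :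
    0 ≤ x * y := by
  have hnot : ∀ (N : ℕ) (x y : ℝ), x - y ≤ N → 0 < x → y < 0 → x • α + y • β ∉ Φ := by
    intro N
    induction N with
    | zero => intro x y hN hx hy; push_cast at hN; linarith
    | succ N ih =>
      intro x y hN hx hy hmem
      push_cast at hN
      by_cases hx₁ : 1 < x
      · exact ih (x - 1) y (by linarith) (by linarith) hy
          (sub_smul_add_smul_mem hΦ hCr hG hC hα hx hy hmem)
      by_cases hy₁ : y < -1
      · exact ih x (y + 1) (by linarith) hx (by linarith)
          (smul_add_add_smul_mem hΦ hCr hG hC hβ hx hy hmem)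
      have hyx := neg_eq_of_smul_add_smul_mem hΦ hCr hG hC hα hβ hx (not_lt.1 hx₁) hy
        (not_lt.1 hy₁) hmem
      rw [hyx, neg_smul, ← sub_eq_add_neg, ← smul_sub] at hmem
      exact hαβ x hx hmem
  by_contra hxy
  rcases mul_neg_iff.1 (not_le.1 hxy) with ⟨hx, hy⟩ | ⟨hx, hy⟩
  · exact hnot _ x y (Nat.le_ceil _) hx hy h
  · refine hnot _ (-x) (-y) (Nat.le_ceil _) (by linarith) (by linarith) ?_
    rw [neg_smul, neg_smul, ← neg_add]
    exact hΦ.neg_mem h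

end RankTwo

section Perturbation

open Filter Topology

/-- `0 < (a i + ε * b i) * a i` says that the perturbation keeps the sign of `a i`. -/
theorem exists_pos_forall_mul_pos {ι : Type*} (F : Finset ι) (a b : ι → ℝ) :
    ∃ ε > 0, ∀ i ∈ F, a i ≠ 0 → 0 < (a i + ε * b i) * a i := by
  have h : ∀ i ∈ F, ∀ᶠ ε in 𝓝[>] (0 : ℝ), a i ≠ 0 → 0 < (a i + ε * b i) * a i := by
    intro i _
    by_cases ha : a i = 0
    · simp [ha]
    have hlim : Tendsto (fun ε => (a i + ε * b i) * a i) (𝓝[>] 0) (𝓝 ((a i + 0 * b i) * a i)) :=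
      (Continuous.tendsto (by fun_prop) 0).mono_left nhdsWithin_le_nhds
    rw [zero_mul, add_zero] at hlim
    exact (hlim.eventually (lt_mem_nhds (mul_self_pos.2 ha))).mono fun ε h _ => h
  obtain ⟨ε, hε, hε0⟩ := (((eventually_all_finset F).2 h).and self_mem_nhdsWithin).exists
  exact ⟨ε, hε0, hε⟩

theorem exists_mem_forall_dotp_ne_zero (K : Submodule ℝ (Fin n → ℝ)) (F : Finset (Fin n → ℝ))
    (h : ∀ γ ∈ F, ∃ η ∈ K, dotp η γ ≠ 0) : ∃ η ∈ K, ∀ γ ∈ F, dotp η γ ≠ 0 := by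
  classical
  induction F using Finset.induction_on with
  | empty => exact ⟨0, K.zero_mem, by simp⟩
  | insert v F _ ih =>
    obtain ⟨η, hηK, hη⟩ := ih fun γ hγ => h γ (Finset.mem_insert_of_mem hγ)
    obtain ⟨η', hη'K, hη'v⟩ := h v (Finset.mem_insert_self v F)
    obtain ⟨ε, hε, hεF⟩ := exists_pos_forall_mul_pos (insert v F) (dotp η) (dotp η')
    refine ⟨η + ε • η', K.add_mem hηK (K.smul_mem ε hη'K), fun γ hγ => ?_⟩
    rw [add_dotp, smul_dotp]
    by_cases h0 : dotp η γ = 0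
    · obtain rfl : γ = v := (Finset.mem_insert.1 hγ).resolve_right fun hγF => hη γ hγF h0
      rw [h0, zero_add]
      exact mul_ne_zero hε.ne' hη'v
    · exact left_ne_zero_of_mul (hεF γ hγ h0).ne'

end Perturbation

section Functional

variable {α β c : Fin n → ℝ}

/-- A small generic perturbation of `proj c - c`, with `proj` the orthogonal projection onto the
plane of `α, β`: on `γ` obtuse to `α` and `β`, `(proj c)ᵀγ ≤ 0` as `proj c ∈ cone(α, β)`. -/
theorem exists_orthogonal_functional (hG : 0 < gram α β) (hC : dotp α β ≤ 0)
    (hcα : 0 < dotp c α) (hcβ : 0 < dotp c β) (Φ : Finset (Fin n → ℝ)) :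
    ∃ z₀, dotp z₀ α = 0 ∧ dotp z₀ β = 0 ∧
      (∀ γ ∈ Φ, γ ∉ Submodule.span ℝ {α, β} → dotp z₀ γ ≠ 0) ∧
      ∀ γ ∈ Φ, 0 < dotp c γ → dotp α γ ≤ 0 → dotp β γ ≤ 0 → dotp z₀ γ < 0 := by
  classical
  set K := LinearMap.ker (dotProductBilin ℝ ℝ α) ⊓ LinearMap.ker (dotProductBilin ℝ ℝ β)
  have hK : ∀ η, η ∈ K ↔ dotp η α = 0 ∧ dotp η β = 0 := fun η => by
    simp [K, dotp_eq_dotProduct, dotProduct_comm α, dotProduct_comm β]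
  have hprojK : ∀ x, planeProj α β x - x ∈ K := fun x => (hK _).2
    ⟨dotp_planeProj_sub_self_left hG.ne' x, dotp_planeProj_sub_self_right hG.ne' x⟩
  have hz₁ : ∀ γ, 0 < dotp c γ → dotp α γ ≤ 0 → dotp β γ ≤ 0 →
      dotp (planeProj α β c - c) γ < 0 := fun γ hcγ hαγ hβγ => by
    have hαc : 0 ≤ dotp α c := dotp_comm c α ▸ hcα.le
    have hβc : 0 ≤ dotp β c := dotp_comm c β ▸ hcβ.le
    have ha := dotp_planeDual_nonneg hG hC hαc hβc
    have hb := dotp_planeDual_nonneg (gram_comm α β ▸ hG) (dotp_comm α β ▸ hC) hβc hαc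
    simp only [planeProj, sub_dotp, add_dotp, smul_dotp]
    nlinarith [mul_nonneg ha (neg_nonneg.2 hαγ), mul_nonneg hb (neg_nonneg.2 hβγ)]
  obtain ⟨η, hηK, hη⟩ := exists_mem_forall_dotp_ne_zero K
    (Φ.filter (· ∉ Submodule.span ℝ {α, β})) fun γ hγ =>
      ⟨_, hprojK γ, dotp_planeProj_sub_self_ne_zero hG.ne' (Finset.mem_filter.1 hγ).2⟩
  obtain ⟨ε, hε, hεΦ⟩ := exists_pos_forall_mul_pos Φ (dotp (planeProj α β c - c)) (dotp η)
  obtain ⟨hα₀, hβ₀⟩ := (hK _).1 (K.add_mem (hprojK c) (K.smul_mem ε hηK))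
  refine ⟨_, hα₀, hβ₀, fun γ hγ hspan => ?_, fun γ hγ hcγ hαγ hβγ => ?_⟩
  · rw [add_dotp, smul_dotp]
    by_cases h0 : dotp (planeProj α β c - c) γ = 0
    · rw [h0, zero_add]
      exact mul_ne_zero hε.ne' (hη γ (Finset.mem_filter.2 ⟨hγ, hspan⟩))
    · exact left_ne_zero_of_mul (hεΦ γ hγ h0).ne'
  · have hneg := hz₁ γ hcγ hαγ hβγ
    have := hεΦ γ hγ hneg.ne
    rw [add_dotp, smul_dotp]
    nlinarith

end Functional

section SimpleRoots

variable {Φ : Finset (Fin n → ℝ)} (hΦ : IsRootSystem Φ)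
include hΦ

theorem inCone_erase_of_sub_mem {P : Finset (Fin n → ℝ)} (hPΦ : P ⊆ Φ) {u v : Fin n → ℝ}
    (hu : u ∈ Φ) (hv : v ∈ P) (huv : u - v ∈ P) : InCone (P.erase u) u := by
  have hvu : v ≠ u := by
    rintro rfl
    exact hΦ.ne_zero (hPΦ huv) (sub_self v)
  have hne : u - v ≠ u := fun h => hΦ.ne_zero (hPΦ hv) (sub_eq_self.1 h)
  have := (inCone_of_mem (Finset.mem_erase.2 ⟨hne, huv⟩)).add
    (inCone_of_mem (Finset.mem_erase.2 ⟨hvu, hv⟩))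
  rwa [sub_add_cancel] at this

theorem inCone_erase_or_inCone_erase (hCr : IsCrystallographic Φ) {z : Fin n → ℝ}
    (hz : ∀ γ ∈ Φ, dotp z γ ≠ 0) {u v : Fin n → ℝ} (hu : u ∈ positiveRoots Φ z)
    (hv : v ∈ positiveRoots Φ z) (huv : 0 < dotp u v) (hne : u ≠ v) :
    InCone ((positiveRoots Φ z).erase u) u ∨ InCone ((positiveRoots Φ z).erase v) v := by
  have hPΦ : positiveRoots Φ z ⊆ Φ := Finset.filter_subset _ _
  have hsub := hΦ.sub_mem hCr (hPΦ hu) (hPΦ hv) huv hne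
  rcases (hz _ hsub).lt_or_gt with hneg | hpos
  · refine Or.inr (inCone_erase_of_sub_mem hΦ hPΦ (hPΦ hv) hu (mem_positiveRoots.2 ⟨?_, ?_⟩))
    · rw [← neg_sub]; exact hΦ.neg_mem hsub
    · rw [← neg_sub, dotp_neg]; linarith
  · exact Or.inl (inCone_erase_of_sub_mem hΦ hPΦ (hPΦ hu) hv (mem_positiveRoots.2 ⟨hsub, hpos⟩))

/-- The pair (`z₀`, `β`-coordinate) vanishes at `α` and is lexicographically positive on
`P ∖ {α}`. -/
theorem not_inCone_erase_of_lex {P : Finset (Fin n → ℝ)} (hPΦ : P ⊆ Φ) {α β z₀ : Fin n → ℝ}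
    (hα : α ∈ P) (hG : gram α β ≠ 0) (hz₀α : dotp z₀ α = 0) (hz₀β : dotp z₀ β = 0)
    (hz₀P : ∀ s ∈ P, s ∉ Submodule.span ℝ {α, β} → 0 < dotp z₀ s)
    (hplane : ∀ x y : ℝ, x • α + y • β ∈ P → 0 ≤ x ∧ 0 ≤ y) : ¬InCone (P.erase α) α := by
  intro hcone
  refine hΦ.ne_zero (hPΦ hα) (hcone.eq_zero_of_lex (u := z₀) (v := planeDual β α)
    (fun s hs => ?_) (fun s hs h0 => ?_) hz₀α.le (dotp_planeDual_other β α).le)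
  · by_cases hspan : s ∈ Submodule.span ℝ {α, β}
    · exact (dotp_eq_zero_of_mem_span hz₀α hz₀β hspan).ge
    · exact (hz₀P s (Finset.mem_of_mem_erase hs) hspan).le
  obtain ⟨hsα, hsP⟩ := Finset.mem_erase.1 hs
  have hspan : s ∈ Submodule.span ℝ {α, β} := by
    by_contra hspan
    exact (hz₀P s hsP hspan).ne' h0
  obtain ⟨x, y, rfl⟩ := Submodule.mem_span_pair.1 hspan
  obtain ⟨hx, hy⟩ := hplane x y hsP
  rw [dotp_planeDual_swap_smul_add_smul hG]
  refine hy.lt_of_ne fun hy0 => hsα ?_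
  rw [← hy0, zero_smul, add_zero] at hsP ⊢
  rw [(hΦ.smul_mem_iff (hPΦ hα) hx).1 (hPΦ hsP), one_smul]

theorem nonneg_of_smul_add_smul_mem (hCr : IsCrystallographic Φ) {α β c : Fin n → ℝ}
    (hα : α ∈ positiveRoots Φ c) (hβ : β ∈ positiveRoots Φ c) (hG : 0 < gram α β)
    (hC : dotp α β ≤ 0) (hαβ : ∀ t : ℝ, 0 < t → t • (α - β) ∉ Φ) {x y : ℝ}
    (h : x • α + y • β ∈ positiveRoots Φ c) : 0 ≤ x ∧ 0 ≤ y := by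
  obtain ⟨hαΦ, hcα⟩ := mem_positiveRoots.1 hα
  obtain ⟨hβΦ, hcβ⟩ := mem_positiveRoots.1 hβ
  obtain ⟨hΦ', hc⟩ := mem_positiveRoots.1 h
  have hxy := mul_nonneg_of_smul_add_smul_mem hΦ hCr hG hC hαΦ hβΦ hαβ hΦ'
  simp only [dotp_add, dotp_smul] at hc
  constructor <;> by_contra hneg <;> push Not at hneg
  · have hy : y ≤ 0 := by nlinarith
    nlinarith [mul_neg_of_neg_of_pos hneg hcα]
  · have hx : x ≤ 0 := by nlinarith
    nlinarith [mul_neg_of_neg_of_pos hneg hcβ]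

theorem simple_iff_of_functional (hCr : IsCrystallographic Φ) {c z z₀ α β : Fin n → ℝ}
    (hz : ∀ γ ∈ Φ, dotp z γ ≠ 0) (hαP : α ∈ positiveRoots Φ z) (hβP : β ∈ positiveRoots Φ z)
    (hG : gram α β ≠ 0) (hz₀α : dotp z₀ α = 0) (hz₀β : dotp z₀ β = 0)
    (hz₀P : ∀ s ∈ positiveRoots Φ z, s ∉ Submodule.span ℝ {α, β} → 0 < dotp z₀ s)
    (hP : ∀ x y : ℝ, x • α + y • β ∈ positiveRoots Φ z → 0 ≤ x ∧ 0 ≤ y)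
    (hacute : ∀ ξ ∈ positiveRoots Φ z, 0 < dotp c ξ → ξ ∉ Submodule.span ℝ {α, β} →
      0 < dotp ξ α ∨ 0 < dotp ξ β)
    {ξ : Fin n → ℝ} (hξ : 0 < dotp c ξ) :
    ξ ∈ positiveRoots Φ z ∧ ¬InCone ((positiveRoots Φ z).erase ξ) ξ ↔ ξ = α ∨ ξ = β := by
  have hPΦ : positiveRoots Φ z ⊆ Φ := Finset.filter_subset _ _
  have hαind := not_inCone_erase_of_lex hΦ hPΦ hαP hG hz₀α hz₀β hz₀P hP
  have hβind := not_inCone_erase_of_lex hΦ hPΦ hβP (gram_comm α β ▸ hG) hz₀β hz₀α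
    (by simpa only [Set.pair_comm] using hz₀P) fun x y h => (hP y x (by rwa [add_comm])).symm
  refine ⟨fun ⟨hξP, hind⟩ => ?_, ?_⟩
  · by_contra hne
    push Not at hne
    apply hind
    by_cases hspan : ξ ∈ Submodule.span ℝ {α, β}
    · obtain ⟨x, y, rfl⟩ := Submodule.mem_span_pair.1 hspan
      obtain ⟨hx, hy⟩ := hP x y hξP
      exact ((inCone_of_mem (Finset.mem_erase.2 ⟨hne.1.symm, hαP⟩)).smul hx).add
        ((inCone_of_mem (Finset.mem_erase.2 ⟨hne.2.symm, hβP⟩)).smul hy)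
    rcases hacute ξ hξP hξ hspan with hξα | hξβ
    · exact (inCone_erase_or_inCone_erase hΦ hCr hz hξP hαP hξα hne.1).resolve_right hαind
    · exact (inCone_erase_or_inCone_erase hΦ hCr hz hξP hβP hξβ hne.2).resolve_right hβind
  · rintro (rfl | rfl)
    exacts [⟨hαP, hαind⟩, ⟨hβP, hβind⟩]

/-- `z` is `z₀ + ε c` for a small `ε > 0`: it agrees in sign with `c` on the plane of `α, β` and
with `z₀` off it. -/
theorem exists_functional_simpleRoots (hCr : IsCrystallographic Φ) {c α β : Fin n → ℝ}
    (hc : ∀ γ ∈ Φ, dotp c γ ≠ 0) (hα : α ∈ positiveRoots Φ c) (hβ : β ∈ positiveRoots Φ c)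
    (hG : 0 < gram α β) (hC : dotp α β ≤ 0) (hαβ : ∀ t : ℝ, 0 < t → t • (α - β) ∉ Φ) :
    ∃ z, (∀ γ ∈ Φ, dotp z γ ≠ 0) ∧ ∀ ξ ∈ positiveRoots Φ c,
      (ξ ∈ positiveRoots Φ z ∧ ¬InCone ((positiveRoots Φ z).erase ξ) ξ ↔ ξ = α ∨ ξ = β) := by
  obtain ⟨hαΦ, hcα⟩ := mem_positiveRoots.1 hα
  obtain ⟨hβΦ, hcβ⟩ := mem_positiveRoots.1 hβ
  obtain ⟨z₀, hz₀α, hz₀β, hz₀Φ, hz₀neg⟩ := exists_orthogonal_functional hG hC hcα hcβ Φ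
  obtain ⟨ε, hε, hεΦ⟩ := exists_pos_forall_mul_pos Φ (dotp z₀) (dotp c)
  set z := z₀ + ε • c
  have hzspan : ∀ γ ∈ Submodule.span ℝ {α, β}, dotp z γ = ε * dotp c γ := fun γ hγ => by
    rw [add_dotp, smul_dotp, dotp_eq_zero_of_mem_span hz₀α hz₀β hγ, zero_add]
  have hzz₀ : ∀ γ ∈ Φ, γ ∉ Submodule.span ℝ {α, β} → 0 < dotp z γ * dotp z₀ γ :=
    fun γ hγ hspan => by simpa [z] using hεΦ γ hγ (hz₀Φ γ hγ hspan)
  have hz : ∀ γ ∈ Φ, dotp z γ ≠ 0 := fun γ hγ => by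
    by_cases hspan : γ ∈ Submodule.span ℝ {α, β}
    · rw [hzspan γ hspan]; exact mul_ne_zero hε.ne' (hc γ hγ)
    · exact left_ne_zero_of_mul (hzz₀ γ hγ hspan).ne'
  have hz₀P : ∀ s ∈ positiveRoots Φ z, s ∉ Submodule.span ℝ {α, β} → 0 < dotp z₀ s :=
    fun s hs hspan => pos_of_mul_pos_right (hzz₀ s (mem_positiveRoots.1 hs).1 hspan)
      (mem_positiveRoots.1 hs).2.le
  have hP : ∀ x y : ℝ, x • α + y • β ∈ positiveRoots Φ z → 0 ≤ x ∧ 0 ≤ y := fun x y hs => by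
    obtain ⟨hsΦ, hzs⟩ := mem_positiveRoots.1 hs
    rw [hzspan _ (Submodule.mem_span_pair.2 ⟨x, y, rfl⟩)] at hzs
    exact nonneg_of_smul_add_smul_mem hΦ hCr hα hβ hG hC hαβ
      (mem_positiveRoots.2 ⟨hsΦ, pos_of_mul_pos_right hzs hε.le⟩)
  have hαP : α ∈ positiveRoots Φ z := mem_positiveRoots.2 ⟨hαΦ, by
    rw [hzspan α (Submodule.subset_span (by simp))]; positivity⟩
  have hβP : β ∈ positiveRoots Φ z := mem_positiveRoots.2 ⟨hβΦ, by
    rw [hzspan β (Submodule.subset_span (by simp))]; positivity⟩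
  have hacute : ∀ ξ ∈ positiveRoots Φ z, 0 < dotp c ξ → ξ ∉ Submodule.span ℝ {α, β} →
      0 < dotp ξ α ∨ 0 < dotp ξ β := fun ξ hξP hcξ hspan => by
    by_contra h
    push Not at h
    exact (hz₀P ξ hξP hspan).not_gt (hz₀neg ξ (mem_positiveRoots.1 hξP).1 hcξ
      (dotp_comm ξ α ▸ h.1) (dotp_comm ξ β ▸ h.2))
  exact ⟨z, hz, fun ξ hξ => simple_iff_of_functional hΦ hCr hz hαP hβP hG.ne' hz₀α hz₀β hz₀P hP
    hacute (mem_positiveRoots.1 hξ).2⟩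

end SimpleRoots

section Incomparable

variable {Φ Δ : Finset (Fin n → ℝ)} {c α β : Fin n → ℝ} (hΦ : IsRootSystem Φ)
include hΦ

theorem gram_pos_of_mem_positiveRoots (hα : α ∈ positiveRoots Φ c)
    (hβ : β ∈ positiveRoots Φ c) (hne : α ≠ β) : 0 < gram α β := by
  obtain ⟨hαΦ, hcα⟩ := mem_positiveRoots.1 hα
  obtain ⟨hβΦ, hcβ⟩ := mem_positiveRoots.1 hβ
  refine gram_pos (hΦ.ne_zero hβΦ) fun t ht => ?_
  rcases hΦ.eq_one_or_eq_neg_one hβΦ (ht ▸ hαΦ) with rfl | rfl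
  · exact hne (by rw [ht, one_smul])
  · rw [ht, neg_one_smul, dotp_neg] at hcα
    linarith

theorem smul_sub_not_mem_of_incomparable (hc : ∀ γ ∈ Φ, dotp c γ ≠ 0)
    (hΔgen : ∀ γ ∈ positiveRoots Φ c, InCone Δ γ)
    (hinc : ¬InCone Δ (α - β) ∧ ¬InCone Δ (β - α)) (t : ℝ) (ht : 0 < t) :
    t • (α - β) ∉ Φ := by
  intro hmem
  have hinv : ∀ x : Fin n → ℝ, t⁻¹ • t • x = x := fun x => inv_smul_smul₀ ht.ne' x
  rcases (hc _ hmem).lt_or_gt with hneg | hpos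
  · refine hinc.2 ?_
    have hP : -(t • (α - β)) ∈ positiveRoots Φ c :=
      mem_positiveRoots.2 ⟨hΦ.neg_mem hmem, by rw [dotp_neg]; linarith⟩
    rw [← smul_neg, neg_sub] at hP
    simpa only [hinv] using (hΔgen _ hP).smul (inv_nonneg.2 ht.le)
  · refine hinc.1 ?_
    simpa only [hinv] using
      (hΔgen _ (mem_positiveRoots.2 ⟨hmem, hpos⟩)).smul (inv_nonneg.2 ht.le)

theorem dotp_nonpos_of_smul_sub_not_mem (hCr : IsCrystallographic Φ) (hα : α ∈ Φ) (hβ : β ∈ Φ)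
    (hne : α ≠ β) (hαβ : ∀ t : ℝ, 0 < t → t • (α - β) ∉ Φ) : dotp α β ≤ 0 :=
  not_lt.1 fun h => hαβ 1 one_pos (by rw [one_smul]; exact hΦ.sub_mem hCr hα hβ h hne)

end Incomparable

theorem statement16_general {n : ℕ} (Φ : Finset (Fin n → ℝ))
    (hRS : IsRootSystem Φ) (hCr : IsCrystallographic Φ)
    (c : Fin n → ℝ) (hc : ∀ α ∈ Φ, dotp c α ≠ 0)
    (Φpos : Set (Fin n → ℝ)) (hpos : Φpos = {α | α ∈ Φ ∧ 0 < dotp c α})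
    (Δ : Finset (Fin n → ℝ))
    (hΔpos : (Δ : Set (Fin n → ℝ)) ⊆ Φpos)
    (hΔgen : ∀ γ ∈ Φpos, InCone Δ γ)
    (hΔmin : ∀ Δ' : Finset (Fin n → ℝ), (Δ' : Set (Fin n → ℝ)) ⊆ Φpos →
      (∀ γ ∈ Φpos, InCone Δ' γ) → Δ ⊆ Δ')
    (α β : Fin n → ℝ) (hα : α ∈ Φpos) (hβ : β ∈ Φpos)
    (hinc : ¬ InCone Δ (α - β) ∧ ¬ InCone Δ (β - α)) :
    ∃ w : (Fin n → ℝ) → (Fin n → ℝ), InWeylGroup Φ w ∧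
      (w '' (Δ : Set (Fin n → ℝ))) ∩ Φpos = {α, β} := by
  obtain rfl : Φpos = positiveRoots Φ c := hpos.trans (Finset.coe_filter _ _).symm
  have hΔ : IsSimpleSystem (positiveRoots Φ c) Δ :=
    ⟨Finset.coe_subset.1 hΔpos, hΔgen, fun Δ' h => hΔmin Δ' (Finset.coe_subset.2 h)⟩
  have hne : α ≠ β := fun h => hinc.1 (by rw [h, sub_self]; exact inCone_zero Δ)
  have hαβ := smul_sub_not_mem_of_incomparable hRS hc hΔgen hinc
  have hG := gram_pos_of_mem_positiveRoots hRS hα hβ hne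
  have hC := dotp_nonpos_of_smul_sub_not_mem hRS hCr (mem_positiveRoots.1 hα).1
    (mem_positiveRoots.1 hβ).1 hne hαβ
  obtain ⟨z, hz, hsimple⟩ := exists_functional_simpleRoots hRS hCr hc hα hβ hG hC hαβ
  obtain ⟨e, he, himage⟩ := hΔ.exists_weyl_image_eq hRS hc hz
  refine ⟨e, he, Set.ext fun ξ => ?_⟩
  rw [Set.mem_inter_iff, hΔ.mem_image_iff, himage, Finset.mem_coe, Set.mem_insert_iff,
    Set.mem_singleton_iff]
  refine ⟨fun ⟨h, hξ⟩ => (hsimple ξ hξ).1 h, fun h => ?_⟩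
  have hξ : ξ ∈ positiveRoots Φ c := by rcases h with rfl | rfl <;> assumption
  exact ⟨(hsimple ξ hξ).2 h, hξ⟩

/-- Theorem: for incomparable positive roots `α, β` of an irreducible
crystallographic root system there is a Weyl group element `w` with `wΔ ∩ Φ⁺ = {α, β}`. -/
theorem statement16 {n : ℕ} (Φ : Finset (Fin n → ℝ))
    (hRS : IsRootSystem Φ) (hCr : IsCrystallographic Φ) (hIrr : IsIrreducibleRS Φ)
    (c : Fin n → ℝ) (hc : ∀ α ∈ Φ, dotp c α ≠ 0)
    (Φpos : Set (Fin n → ℝ)) (hpos : Φpos = {α | α ∈ Φ ∧ 0 < dotp c α})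
    (Δ : Finset (Fin n → ℝ))
    (hΔpos : (Δ : Set (Fin n → ℝ)) ⊆ Φpos)
    (hΔgen : ∀ γ ∈ Φpos, InCone Δ γ)
    (hΔmin : ∀ Δ' : Finset (Fin n → ℝ), (Δ' : Set (Fin n → ℝ)) ⊆ Φpos →
      (∀ γ ∈ Φpos, InCone Δ' γ) → Δ ⊆ Δ')
    (α β : Fin n → ℝ) (hα : α ∈ Φpos) (hβ : β ∈ Φpos)
    (hinc : ¬ InCone Δ (α - β) ∧ ¬ InCone Δ (β - α)) :
    ∃ w : (Fin n → ℝ) → (Fin n → ℝ), InWeylGroup Φ w ∧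
      (w '' (Δ : Set (Fin n → ℝ))) ∩ Φpos = {α, β} :=
  statement16_general Φ hRS hCr c hc Φpos hpos Δ hΔpos hΔgen hΔmin α β hα hβ hinc
end

section
/- Let G = (V,E) be a finite simple undirected graph and define f : 2^V → ℤ_{≥0} by f(S) = |S| + |N_G(S)|, where N_G(S) = {u ∈ V∖S : uv ∈ E for some v ∈ S}. Then f is a polymatroid (f(∅) = 0, f is nondecreasing, and f is submodular), and the convex hull of the in-degree sequences of branchings of G — that is, the translate N(G) + 𝟙 of the graphical neighbotope by the all-ones vector — equals the polymatroid base polytope B_f. -/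
open Pointwise

/-- `B` is a branching of the graph `G`. -/
def IsBranching {V : Type*} (G : SimpleGraph V) (B : V → V) : Prop :=
  (∀ v, B v = v ∨ G.Adj v (B v)) ∧ ∀ v, ∃ k : ℕ, B^[k + 1] v = B^[k] v

/-- The in-degree sequence `δ(B)` of a branching `B`. -/
noncomputable def inDeg {V : Type*} [Fintype V] [DecidableEq V] (B : V → V) : V → ℝ :=
  fun v => ((Finset.univ.filter fun u => B u = v).card : ℝ)

/-- The reduced in-degree sequence `δ̄(B) = δ(B) - 𝟙`. -/
noncomputable def redInDeg {V : Type*} [Fintype V] [DecidableEq V] (B : V → V) : V → ℝ :=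
  fun v => inDeg B v - 1

/-- The graphical neighbotope `N(G)`. -/
noncomputable def graphNeighbotope {V : Type*} [Fintype V] [DecidableEq V]
    (G : SimpleGraph V) : Set (V → ℝ) :=
  convexHull ℝ {x | ∃ B, IsBranching G B ∧ x = redInDeg B}

/-!
Write `N[u]` for the closed neighbourhood of `u`. Then `f S` counts the vertices `u` whose
`N[u]` meets `S`, a coverage function, hence a polymatroid, and the in-degree vector of any map
`B` with `B u ∈ N[u]` lies in `B_f`. Conversely, fix a weight `c` and let `B u` maximise `c`
on `N[u]`. On every superlevel set `{c > t}` the in-degree vector of `B` attains the bound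
`f {c > t}`, so by Abel summation `∑ c v x v ≤ ∑ c (B u)` for every `x ∈ B_f`; no linear
functional separates `B_f` from these in-degree vectors. Breaking ties in favour of `B u = u`
makes `c` strictly increase along `B`, so `B` is a branching.
-/

open Finset

theorem sum_mul_nonneg_of_sum_superlevel_nonneg {ι : Type*} [Fintype ι] (c z : ι → ℝ)
    (hz : ∑ i, z i = 0) (hlevel : ∀ t, 0 ≤ ∑ i with t < c i, z i) :
    0 ≤ ∑ i, c i * z i := by
  classical
  suffices key : ∀ s : Finset ℝ, ∀ c : ι → ℝ, (∀ i, c i ∈ s) →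
      (∀ t, 0 ≤ ∑ i with t < c i, z i) → 0 ≤ ∑ i, c i * z i from
    key _ c (fun i => mem_image_of_mem c (mem_univ i)) hlevel
  intro s
  induction s using Finset.induction_on_max with
  | empty =>
    intro c hc _
    have : IsEmpty ι := ⟨fun i => by simpa using hc i⟩
    simp
  | insert a s hlt ih =>
    intro c hc hlevel
    rcases s.eq_empty_or_nonempty with rfl | hs
    · have hca : ∀ i, c i = a := by simpa using hc
      simp [hca, ← mul_sum, hz]
    -- truncating `c` at its second largest value `t` removes the value `a`
    set t := s.max' hs
    have hta : t < a := hlt t (max'_mem s hs)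
    have hc_le : ∀ i, c i ≠ a → c i ≤ t := fun i hi =>
      le_max' s _ ((mem_insert.1 (hc i)).resolve_left hi)
    have hmin : ∀ i, min (c i) t ∈ s := by
      intro i
      by_cases hi : c i = a
      · rw [hi, min_eq_right hta.le]; exact max'_mem s hs
      · rw [min_eq_left (hc_le i hi)]; exact (mem_insert.1 (hc i)).resolve_left hi
    have hlevel_min : ∀ t', 0 ≤ ∑ i with t' < min (c i) t, z i := by
      intro t'
      by_cases ht' : t' < t
      · simpa only [lt_min_iff, ht', and_true] using hlevel t'
      · simp [show ∀ i, ¬ t' < min (c i) t from fun i h => ht' (h.trans_le (min_le_right _ _))]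
    have hsplit : ∑ i, c i * z i = ∑ i, min (c i) t * z i + (a - t) * ∑ i with t < c i, z i := by
      rw [sum_filter, mul_sum, ← sum_add_distrib]
      refine sum_congr rfl fun i _ => ?_
      by_cases hi : c i = a
      · simp [hi, hta, min_eq_right hta.le]; ring
      · simp [min_eq_left (hc_le i hi), not_lt.2 (hc_le i hi)]
    rw [hsplit]
    exact add_nonneg (ih _ hmin hlevel_min) (mul_nonneg (sub_nonneg.2 hta.le) (hlevel t))

theorem mem_convexHull_of_forall_exists_le {E : Type*} [TopologicalSpace E] [AddCommGroup E]
    [Module ℝ E] [IsTopologicalAddGroup E] [ContinuousSMul ℝ E] [LocallyConvexSpace ℝ E]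
    [T2Space E] {s : Set E} (hs : s.Finite) {x : E}
    (h : ∀ φ : E →L[ℝ] ℝ, ∃ y ∈ s, φ x ≤ φ y) : x ∈ convexHull ℝ s := by
  by_contra hx
  obtain ⟨φ, u, hlt, hgt⟩ := geometric_hahn_banach_closed_point (convex_convexHull ℝ s)
    (hs.isCompact_convexHull ℝ).isClosed hx
  obtain ⟨y, hy, hle⟩ := h φ
  linarith [hlt y (subset_convexHull ℝ s hy)]

section RelPreimage

variable {V : Type*} [Fintype V] (r : V → V → Prop) [DecidableRel r]

def relPreimage (S : Finset V) : Finset V := {u | ∃ v ∈ S, r u v}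

@[simp]
theorem mem_relPreimage {S : Finset V} {u : V} : u ∈ relPreimage r S ↔ ∃ v ∈ S, r u v := by
  simp [relPreimage]

@[simp]
theorem relPreimage_empty : relPreimage r ∅ = ∅ := by ext; simp

theorem relPreimage_mono : Monotone (relPreimage r) := fun _ _ hST _ => by
  simp only [mem_relPreimage]
  exact fun ⟨v, hv, huv⟩ => ⟨v, hST hv, huv⟩

theorem relPreimage_union [DecidableEq V] (S T : Finset V) :
    relPreimage r (S ∪ T) = relPreimage r S ∪ relPreimage r T := by
  ext; simp [or_and_right, exists_or]

theorem card_relPreimage_union_add_card_relPreimage_inter_le [DecidableEq V] (S T : Finset V) :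
    #(relPreimage r (S ∪ T)) + #(relPreimage r (S ∩ T)) ≤
      #(relPreimage r S) + #(relPreimage r T) := by
  have hinter : relPreimage r (S ∩ T) ⊆ relPreimage r S ∩ relPreimage r T :=
    subset_inter (relPreimage_mono r inter_subset_left) (relPreimage_mono r inter_subset_right)
  calc #(relPreimage r (S ∪ T)) + #(relPreimage r (S ∩ T))
      ≤ #(relPreimage r S ∪ relPreimage r T) + #(relPreimage r S ∩ relPreimage r T) := by
        rw [relPreimage_union]; gcongr
    _ = #(relPreimage r S) + #(relPreimage r T) := card_union_add_card_inter _ _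

theorem relPreimage_superlevel_eq {B : V → V} {c : V → ℝ} (hB : ∀ u, r u (B u))
    (hmax : ∀ u v, r u v → c v ≤ c (B u)) (t : ℝ) :
    relPreimage r {v | t < c v} = ({u | t < c (B u)} : Finset V) := by
  ext u
  simp only [mem_relPreimage, mem_filter, mem_univ, true_and]
  exact ⟨fun ⟨v, hv, huv⟩ => hv.trans_le (hmax u v huv), fun h => ⟨B u, h, hB u⟩⟩

end RelPreimage

def basePolytope {V : Type*} [Fintype V] (f : Finset V → ℕ) : Set (V → ℝ) :=
  {x | (∀ v, 0 ≤ x v) ∧ (∀ S : Finset V, ∑ v ∈ S, x v ≤ (f S : ℝ)) ∧ ∑ v, x v = (f univ : ℝ)}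

theorem convex_basePolytope {V : Type*} [Fintype V] (f : Finset V → ℕ) :
    Convex ℝ (basePolytope f) := by
  rintro x ⟨hx0, hxS, hxV⟩ y ⟨hy0, hyS, hyV⟩ a b ha hb hab
  refine ⟨fun v => ?_, fun S => ?_, ?_⟩ <;>
    simp only [Pi.add_apply, Pi.smul_apply, smul_eq_mul, sum_add_distrib, ← mul_sum, hxV, hyV]
  · exact add_nonneg (mul_nonneg ha (hx0 v)) (mul_nonneg hb (hy0 v))
  · calc a * ∑ v ∈ S, x v + b * ∑ v ∈ S, y v ≤ a * f S + b * f S := by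
          gcongr; exacts [hxS S, hyS S]
      _ = f S := by rw [← add_mul, hab, one_mul]
  · rw [← add_mul, hab, one_mul]

section InDeg

variable {V : Type*} [Fintype V] [DecidableEq V]

theorem sum_inDeg (B : V → V) (S : Finset V) : ∑ v ∈ S, inDeg B v = #{u | B u ∈ S} := by
  simp only [inDeg]
  exact_mod_cast sum_card_fiberwise_eq_card_filter univ S B

theorem sum_mul_inDeg (c : V → ℝ) (B : V → V) : ∑ v, c v * inDeg B v = ∑ u, c (B u) := by
  rw [← sum_fiberwise univ B fun u => c (B u)]
  refine sum_congr rfl fun v _ => ?_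
  rw [sum_congr rfl fun u hu => by rw [(mem_filter.1 hu).2], sum_const, nsmul_eq_mul, inDeg,
    mul_comm]

variable (r : V → V → Prop) [DecidableRel r]

theorem inDeg_mem_basePolytope {B : V → V} (hB : ∀ u, r u (B u)) :
    inDeg B ∈ basePolytope fun S => #(relPreimage r S) := by
  refine ⟨fun v => by simp [inDeg], fun S => ?_, ?_⟩
  · rw [sum_inDeg]
    exact_mod_cast card_le_card fun u hu => (mem_relPreimage r).2 ⟨B u, (mem_filter.1 hu).2, hB u⟩
  · rw [sum_inDeg]
    congr 2
    ext u
    simpa using ⟨B u, hB u⟩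

theorem sum_mul_le_of_mem_basePolytope {x : V → ℝ}
    (hx : x ∈ basePolytope fun S => #(relPreimage r S)) {B : V → V} {c : V → ℝ}
    (hB : ∀ u, r u (B u)) (hmax : ∀ u v, r u v → c v ≤ c (B u)) :
    ∑ v, c v * x v ≤ ∑ u, c (B u) := by
  have hB' := inDeg_mem_basePolytope r hB
  have key := sum_mul_nonneg_of_sum_superlevel_nonneg c (fun v => inDeg B v - x v)
    (by rw [sum_sub_distrib, hB'.2.2, hx.2.2, sub_self]) fun t => by
      rw [sum_sub_distrib, sub_nonneg, sum_inDeg]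
      simpa [relPreimage_superlevel_eq r hB hmax] using hx.2.1 {v | t < c v}
  simpa only [mul_sub, sum_sub_distrib, sum_mul_inDeg, sub_nonneg] using key

theorem convexHull_image_inDeg_eq_basePolytope (D : Set (V → V)) (hD : ∀ B ∈ D, ∀ u, r u (B u))
    (hmax : ∀ c : V → ℝ, ∃ B ∈ D, ∀ u v, r u v → c v ≤ c (B u)) :
    convexHull ℝ (inDeg '' D) = basePolytope fun S => #(relPreimage r S) := by
  refine (convexHull_min ?_ (convex_basePolytope _)).antisymm fun x hx => ?_
  · rintro _ ⟨B, hB, rfl⟩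
    exact inDeg_mem_basePolytope r (hD B hB)
  refine mem_convexHull_of_forall_exists_le (D.toFinite.image _) fun φ => ?_
  set c : V → ℝ := fun v => φ fun j => if v = j then 1 else 0
  have hφ : ∀ y, φ y = ∑ v, c v * y v := fun y => by
    rw [← φ.coe_coe, LinearMap.pi_apply_eq_sum_univ]
    simp [c, mul_comm]
  obtain ⟨B, hBD, hBmax⟩ := hmax c
  refine ⟨inDeg B, Set.mem_image_of_mem _ hBD, ?_⟩
  rw [hφ, hφ, sum_mul_inDeg]
  exact sum_mul_le_of_mem_basePolytope r hx (hD B hBD) hBmax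

end InDeg

theorem exists_iterate_succ_eq_of_lt_of_ne {α β : Type*} [Finite α] [LinearOrder β]
    (B : α → α) (c : α → β) (hc : ∀ a, B a ≠ a → c a < c (B a)) (a : α) :
    ∃ k, B^[k + 1] a = B^[k] a := by
  by_contra! h
  have hmono : StrictMono fun k => c (B^[k] a) := strictMono_nat_of_lt_succ fun k => by
    simp only [Function.iterate_succ_apply'] at h ⊢
    exact hc _ (h k)
  exact not_injective_infinite_finite _ hmono.injective.of_comp

section Graph

variable {V : Type*} [Fintype V] [DecidableEq V] (G : SimpleGraph V) [DecidableRel G.Adj]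

theorem card_relPreimage_eq_or_adj (S : Finset V) :
    #(relPreimage (fun u v => v = u ∨ G.Adj u v) S) =
      #S + #{u | u ∉ S ∧ ∃ v ∈ S, G.Adj u v} := by
  rw [← card_union_of_disjoint (disjoint_left.2 fun u hu h => (mem_filter.1 h).2.1 hu)]
  congr 1
  ext u
  simp only [mem_relPreimage, mem_union, mem_filter, mem_univ, true_and]
  constructor
  · rintro ⟨v, hv, rfl | huv⟩
    · exact .inl hv
    · by_cases hu : u ∈ S
      exacts [.inl hu, .inr ⟨hu, v, hv, huv⟩]
  · rintro (hu | ⟨-, v, hv, huv⟩)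
    exacts [⟨u, hu, .inl rfl⟩, ⟨v, hv, .inr huv⟩]

theorem exists_isBranching_forall_le (c : V → ℝ) :
    ∃ B, IsBranching G B ∧ ∀ u v, (v = u ∨ G.Adj u v) → c v ≤ c (B u) := by
  have hbest : ∀ u, ∃ w, (w = u ∨ G.Adj u w) ∧ ∀ v, (v = u ∨ G.Adj u v) → c v ≤ c w := by
    intro u
    obtain ⟨w, hw, hwmax⟩ := exists_max_image ({v | v = u ∨ G.Adj u v} : Finset V) c ⟨u, by simp⟩
    exact ⟨w, by simpa using hw, fun v hv => hwmax v (by simpa using hv)⟩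
  choose w hw hwmax using hbest
  -- ties are broken in favour of staying put, so that every move strictly increases `c`
  let B u := if c (w u) ≤ c u then u else w u
  have hstep : ∀ u, B u ≠ u → c u < c (B u) := fun u hu => by
    by_cases h : c (w u) ≤ c u
    · simp [B, h] at hu
    · simpa [B, h] using lt_of_not_ge h
  refine ⟨B, ⟨fun u => ?_, exists_iterate_succ_eq_of_lt_of_ne B c hstep⟩, fun u v huv => ?_⟩
  · by_cases h : c (w u) ≤ c u
    · simp [B, h]
    · simpa [B, h] using hw u
  · by_cases h : c (w u) ≤ c u
    · simpa [B, h] using (hwmax u v huv).trans h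
    · simpa [B, h] using hwmax u v huv

end Graph

/-- Proposition: `f(S) = |S| + |N_G(S)|` is a polymatroid whose base polytope
is the convex hull of the in-degree sequences of branchings, i.e. the translate `N(G) + 𝟙`. -/
theorem statement18 {V : Type*} [Fintype V] [DecidableEq V] (G : SimpleGraph V)
    [DecidableRel G.Adj] (f : Finset V → ℕ)
    (hf : ∀ S, f S = S.card +
      (Finset.univ.filter fun u => u ∉ S ∧ ∃ v ∈ S, G.Adj u v).card) :
    f ∅ = 0 ∧
    (∀ S T : Finset V, S ⊆ T → f S ≤ f T) ∧
    (∀ S T : Finset V, f (S ∪ T) + f (S ∩ T) ≤ f S + f T) ∧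
    convexHull ℝ {x : V → ℝ | ∃ B, IsBranching G B ∧ x = inDeg B} =
      ((fun _ => (1 : ℝ)) : V → ℝ) +ᵥ graphNeighbotope G ∧
    convexHull ℝ {x : V → ℝ | ∃ B, IsBranching G B ∧ x = inDeg B} =
      {x : V → ℝ | (∀ v, 0 ≤ x v) ∧ (∀ S : Finset V, ∑ v ∈ S, x v ≤ (f S : ℝ)) ∧
        ∑ v, x v = (f Finset.univ : ℝ)} := by
  obtain rfl : f = fun S => #(relPreimage (fun u v => v = u ∨ G.Adj u v) S) :=
    funext fun S => (hf S).trans (card_relPreimage_eq_or_adj G S).symm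
  have hinDeg : {x | ∃ B, IsBranching G B ∧ x = inDeg B} = inDeg '' {B | IsBranching G B} := by
    ext; simp [eq_comm]
  have hredInDeg : {x | ∃ B, IsBranching G B ∧ x = inDeg B} =
      ((fun _ => (1 : ℝ)) : V → ℝ) +ᵥ {x | ∃ B, IsBranching G B ∧ x = redInDeg B} := by
    have hvadd (B : V → V) : (fun _ => (1 : ℝ)) + redInDeg B = inDeg B := by
      ext; simp [redInDeg]
    ext x
    simp [Set.mem_vadd_set, hvadd, eq_comm]
  refine ⟨by simp, fun S T hST => card_le_card (relPreimage_mono _ hST),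
    card_relPreimage_union_add_card_relPreimage_inter_le _, ?_, ?_⟩
  · rw [hredInDeg, convexHull_vadd]
    rfl
  · rw [hinDeg]
    exact convexHull_image_inDeg_eq_basePolytope _ _ (fun B hB => hB.1)
      (exists_isBranching_forall_le G)
end
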